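/- arXiv:1911.01462 — 2 statements merged into one kernel-verified Lean document; each statement's English description precedes it below -/
import Mathlib

section
/- Let γ be the standard Gaussian measure on ℝ and let H_n be the probabilists' Hermite polynomials. Then ∫ ReLU(x) dγ(x) = 1/√(2π), ∫ ReLU(x)·H_1(x) dγ(x) = 1/2, and for every integer i ≥ 2, ∫ ReLU(x)·H_i(x) dγ(x) = (1/√(2π))·(H_i(0) + i·H_{i−2}(0)). -/
/-!
Write `φ(x) = exp(-x²/2)`. The recurrence `H_{n+1} = x H_n - H_n'` says exactly that
`(H_n φ)' = -H_{n+1} φ`, and `H_n φ → 0` at infinity, so `∫_0^∞ H_{n+1} φ = H_n(0)`.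
Since ReLU vanishes on the negative half-line, `∫ ReLU·H_i dγ = (2π)^{-1/2} ∫_0^∞ x H_i φ`,
and the three-term recurrence `x H_{n+1} = H_{n+2} + (n+1) H_n` reduces this to integrals of the
previous kind, except for `∫_0^∞ φ = √(2π)/2`, which appears when `i = 1`.
-/

open MeasureTheory ProbabilityTheory Real

/-- `ReLU(a) = max(0, a)`. -/
noncomputable def relu (a : ℝ) : ℝ := max 0 a

/-- The probabilists' Hermite polynomials, evaluated at a real number. -/
noncomputable def H (n : ℕ) (x : ℝ) : ℝ := Polynomial.aeval x (Polynomial.hermite n)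

open Polynomial Set Filter Topology

namespace Polynomial

theorem derivative_hermite_succ (n : ℕ) :
    derivative (hermite (n + 1)) = ((n : ℤ[X]) + 1) * hermite n := by
  induction n with
  | zero => simp
  | succ n ih =>
    rw [hermite_succ (n + 1), derivative_sub, derivative_mul, derivative_X, ih, derivative_mul,
      hermite_succ n]
    simp only [derivative_add, derivative_natCast, derivative_one]
    push_cast
    ring

theorem X_mul_hermite_succ (n : ℕ) :
    X * hermite (n + 1) = hermite (n + 2) + ((n : ℤ[X]) + 1) * hermite n := by
  rw [hermite_succ (n + 1), derivative_hermite_succ]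
  ring

theorem tendsto_eval_mul_exp_neg_sq_div_two (p : ℝ[X]) :
    Tendsto (fun x ↦ p.eval x * rexp (-(x ^ 2 / 2))) atTop (𝓝 0) := by
  rw [tendsto_zero_iff_abs_tendsto_zero]
  refine squeeze_zero' (Eventually.of_forall fun x ↦ abs_nonneg _) ?_
    (by simpa using (tendsto_div_exp_atTop p).abs)
  filter_upwards [eventually_ge_atTop (2 : ℝ)] with x hx
  rw [Function.comp_apply, abs_mul, abs_div, abs_of_pos (exp_pos _), abs_of_pos (exp_pos _),
    div_eq_mul_inv _ (rexp x), ← exp_neg]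
  gcongr
  nlinarith

theorem integrableOn_Ioi_eval_mul_exp_neg_sq_div_two (p : ℝ[X]) :
    IntegrableOn (fun x ↦ p.eval x * rexp (-(x ^ 2 / 2))) (Ioi 0) := by
  have monomial_integrable (k : ℕ) :
      IntegrableOn (fun x : ℝ ↦ x ^ k * rexp (-(x ^ 2 / 2))) (Ioi 0) := by
    have := integrableOn_rpow_mul_exp_neg_mul_sq (b := 1 / 2) (by norm_num)
      (s := k) (by linarith [k.cast_nonneg (α := ℝ)])
    refine this.congr_fun (fun x _ ↦ ?_) measurableSet_Ioi
    simp only [rpow_natCast]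
    ring_nf
  simp_rw [eval_eq_sum_range, Finset.sum_mul, mul_assoc]
  exact integrable_finsetSum _ fun k _ ↦ (monomial_integrable k).const_mul _

end Polynomial

theorem H_eq_eval_map (n : ℕ) (x : ℝ) :
    H n x = ((hermite n).map (Int.castRingHom ℝ)).eval x := by
  rw [H, aeval_def, eval_map, algebraMap_int_eq]

theorem H_zero (x : ℝ) : H 0 x = 1 := by simp [H]

theorem H_one (x : ℝ) : H 1 x = x := by simp [H]

theorem mul_H_succ (n : ℕ) (x : ℝ) : x * H (n + 1) x = H (n + 2) x + (n + 1) * H n x := by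
  simpa [H] using congrArg (aeval x) (X_mul_hermite_succ n)

theorem hasDerivAt_H_mul_exp_neg_sq_div_two (n : ℕ) (x : ℝ) :
    HasDerivAt (fun y ↦ H n y * rexp (-(y ^ 2 / 2)))
      (-(H (n + 1) x * rexp (-(x ^ 2 / 2)))) x := by
  have hexp : HasDerivAt (fun y ↦ rexp (-(y ^ 2 / 2))) (-x * rexp (-(x ^ 2 / 2))) x := by
    simpa [mul_comm] using (((hasDerivAt_pow 2 x).div_const 2).neg).exp
  refine (((hermite n).hasDerivAt_aeval x).mul hexp).congr_deriv ?_
  simp only [H, hermite_succ, map_sub, map_mul, aeval_X]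
  ring

theorem integrableOn_Ioi_H_mul_exp_neg_sq_div_two (n : ℕ) :
    IntegrableOn (fun x ↦ H n x * rexp (-(x ^ 2 / 2))) (Ioi 0) := by
  simpa only [← H_eq_eval_map] using
    integrableOn_Ioi_eval_mul_exp_neg_sq_div_two ((hermite n).map (Int.castRingHom ℝ))

theorem integral_Ioi_H_succ_mul_exp_neg_sq_div_two (n : ℕ) :
    ∫ x in Ioi 0, H (n + 1) x * rexp (-(x ^ 2 / 2)) = H n 0 := by
  have htends := tendsto_eval_mul_exp_neg_sq_div_two ((hermite n).map (Int.castRingHom ℝ))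
  simp_rw [← H_eq_eval_map] at htends
  rw [integral_Ioi_of_hasDerivAt_of_tendsto' (f := fun y ↦ -(H n y * rexp (-(y ^ 2 / 2))))
    (fun x _ ↦ by simpa using (hasDerivAt_H_mul_exp_neg_sq_div_two n x).fun_neg)
    (integrableOn_Ioi_H_mul_exp_neg_sq_div_two (n + 1))
    (by simpa using htends.neg)]
  simp

theorem integral_Ioi_mul_H_succ_mul_exp_neg_sq_div_two (n : ℕ) :
    ∫ x in Ioi 0, x * H (n + 1) x * rexp (-(x ^ 2 / 2))
      = H (n + 1) 0 + (n + 1) * ∫ x in Ioi 0, H n x * rexp (-(x ^ 2 / 2)) := by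
  have three_term (x : ℝ) : x * H (n + 1) x * rexp (-(x ^ 2 / 2))
      = H (n + 2) x * rexp (-(x ^ 2 / 2)) + (n + 1) * (H n x * rexp (-(x ^ 2 / 2))) := by
    rw [mul_H_succ]
    ring
  simp_rw [three_term]
  rw [integral_add (integrableOn_Ioi_H_mul_exp_neg_sq_div_two (n + 2))
      ((integrableOn_Ioi_H_mul_exp_neg_sq_div_two n).const_mul _),
    integral_const_mul, integral_Ioi_H_succ_mul_exp_neg_sq_div_two]

theorem integral_gaussianReal_zero_one (f : ℝ → ℝ) :
    ∫ x, f x ∂gaussianReal 0 1 = (√(2 * π))⁻¹ * ∫ x, f x * rexp (-(x ^ 2 / 2)) := by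
  rw [integral_gaussianReal_eq_integral_smul one_ne_zero, ← integral_const_mul]
  congr with x
  simp only [gaussianPDFReal, smul_eq_mul, NNReal.coe_one, mul_one, sub_zero, neg_div]
  ring

theorem integral_relu_mul_gaussianReal (f : ℝ → ℝ) :
    ∫ x, relu x * f x ∂gaussianReal 0 1
      = (√(2 * π))⁻¹ * ∫ x in Ioi 0, x * f x * rexp (-(x ^ 2 / 2)) := by
  rw [integral_gaussianReal_zero_one, ← setIntegral_eq_integral_of_forall_compl_eq_zero
    (s := Ioi 0) fun x (hx : ¬0 < x) ↦ by simp [relu, not_lt.mp hx]]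
  congr 1
  exact setIntegral_congr_fun measurableSet_Ioi fun x (hx : 0 < x) ↦ by
    rw [relu, max_eq_right hx.le]

/-- Hermite coefficients of the ReLU function with respect to the standard Gaussian:
`∫ ReLU dγ = 1/√(2π)`, `∫ ReLU·H_1 dγ = 1/2`, and for `i ≥ 2`,
`∫ ReLU·H_i dγ = (1/√(2π))·(H_i(0) + i·H_{i-2}(0))`. -/
theorem stmt1 :
    (∫ x : ℝ, relu x ∂(gaussianReal 0 1)) = 1 / Real.sqrt (2 * Real.pi) ∧
    (∫ x : ℝ, relu x * H 1 x ∂(gaussianReal 0 1)) = 1 / 2 ∧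
    ∀ i : ℕ, 2 ≤ i →
      (∫ x : ℝ, relu x * H i x ∂(gaussianReal 0 1))
        = (1 / Real.sqrt (2 * Real.pi)) * (H i 0 + (i : ℝ) * H (i - 2) 0) := by
  refine ⟨?_, ?_, fun i hi ↦ ?_⟩
  · have h := integral_relu_mul_gaussianReal (H 0)
    have h' := integral_Ioi_H_succ_mul_exp_neg_sq_div_two 0
    simp only [zero_add, H_zero, H_one, mul_one] at h h'
    rw [h, h', mul_one, one_div]
  · have gaussian_half : ∫ x in Ioi 0, rexp (-(x ^ 2 / 2)) = √(2 * π) / 2 := by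
      simpa [neg_div, div_eq_inv_mul, ← div_mul_eq_mul_div] using integral_gaussian_Ioi (1 / 2)
    rw [integral_relu_mul_gaussianReal, integral_Ioi_mul_H_succ_mul_exp_neg_sq_div_two 0]
    simp only [zero_add, Nat.cast_zero, H_one, H_zero, one_mul, gaussian_half]
    field_simp
  · obtain ⟨m, rfl⟩ : ∃ m, i = m + 2 := ⟨i - 2, by omega⟩
    rw [integral_relu_mul_gaussianReal, integral_Ioi_mul_H_succ_mul_exp_neg_sq_div_two (m + 1),
      integral_Ioi_H_succ_mul_exp_neg_sq_div_two, Nat.add_sub_cancel]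
    push_cast
    ring
end

section
/- Let D be a probability distribution on ℝ^d × [0, 1] whose marginal on ℝ^d is N(0, I_d), let w* ∈ ℝ^d be a unit vector, let opt = E_{(x,y)∼D}[(ReLU(w*·x) − y)²], and let α > 0. Then P_{(x,y)∼D}[sign(y − α) ≠ sign(w*·x)] ≤ opt/α² + 2α. -/
open MeasureTheory ProbabilityTheory Real

/-- `sign(a) = 1` if `a ≥ 0` and `-1` otherwise. -/
noncomputable def sgn (a : ℝ) : ℝ := if 0 ≤ a then 1 else -1

/-- The standard Gaussian measure `N(0, I_d)` on `ℝ^d`. -/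
noncomputable def stdGaussianPi (d : ℕ) : Measure (Fin d → ℝ) :=
  Measure.pi fun _ => gaussianReal 0 1

/-!
If `sign(y - α) ≠ sign(w*·x)`, then either the ReLU loss `(ReLU(w*·x) - y)²` is at least `α²`,
or `w*·x` falls in the strip `[0, 2α)`. Markov's inequality bounds the probability of the first
event by `opt / α²`. For the second, `w*·x` is a standard Gaussian because `w*` is a unit vector,
and the standard Gaussian density is at most `1 / √(2π) ≤ 1`, so the strip has mass at most `2α`.
-/
lemma abs_relu_le (a : ℝ) : |relu a| ≤ |a| := by
  rw [relu, abs_of_nonneg (le_max_left 0 a)]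
  exact max_le (abs_nonneg a) (le_abs_self a)

lemma continuous_relu : Continuous relu :=
  continuous_const.max continuous_id

lemma sq_le_sq_relu_sub_or_mem_Ico_of_sgn_ne {α y z : ℝ} (hα : 0 ≤ α)
    (h : sgn (y - α) ≠ sgn z) : α ^ 2 ≤ (relu z - y) ^ 2 ∨ z ∈ Set.Ico 0 (2 * α) := by
  unfold sgn at h
  unfold relu
  by_cases hy : α ≤ y
  · have hz : z < 0 := by by_contra hz; simp_all
    left
    rw [max_eq_left hz.le]
    nlinarith
  · have hz : 0 ≤ z := by by_contra hz; simp_all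
    rw [max_eq_right hz]
    by_cases hz' : z < 2 * α
    · exact Or.inr ⟨hz, hz'⟩
    · left
      nlinarith

lemma measureReal_le_integral_sq_div_sq {Ω : Type*} [MeasurableSpace Ω] {μ : Measure Ω}
    {g : Ω → ℝ} (hg : Integrable (fun x => g x ^ 2) μ) {ε : ℝ} (hε : ε ≠ 0) :
    μ.real {x | ε ^ 2 ≤ g x ^ 2} ≤ (∫ x, g x ^ 2 ∂μ) / ε ^ 2 := by
  rw [le_div_iff₀' (by positivity)]
  exact mul_meas_ge_le_integral_of_nonneg (ae_of_all _ fun x => sq_nonneg _) hg _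

lemma gaussianPDFReal_le (μ : ℝ) (v : NNReal) (x : ℝ) :
    gaussianPDFReal μ v x ≤ (√(2 * π * v))⁻¹ := by
  rw [gaussianPDFReal]
  refine mul_le_of_le_one_right (by positivity) (Real.exp_le_one_iff.2 ?_)
  exact div_nonpos_of_nonpos_of_nonneg (neg_nonpos.2 (sq_nonneg _)) (by positivity)

lemma gaussianReal_le_volume (μ : ℝ) : gaussianReal μ 1 ≤ volume := by
  have hdens : ∀ x, gaussianPDF μ 1 x ≤ 1 := fun x => by
    refine ENNReal.ofReal_le_one.2 ((gaussianPDFReal_le μ 1 x).trans (inv_le_one_of_one_le₀ ?_))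
    rw [NNReal.coe_one, mul_one, Real.one_le_sqrt]
    nlinarith [Real.pi_gt_three]
  rw [gaussianReal_of_var_ne_zero μ one_ne_zero]
  conv_rhs => rw [← withDensity_one (μ := volume)]
  exact withDensity_mono (ae_of_all _ hdens)

lemma measureReal_gaussianReal_Ico_le (μ : ℝ) {a b : ℝ} (hab : a ≤ b) :
    (gaussianReal μ 1).real (Set.Ico a b) ≤ b - a := by
  calc (gaussianReal μ 1).real (Set.Ico a b) ≤ volume.real (Set.Ico a b) :=
        ENNReal.toReal_mono measure_Ico_lt_top.ne (gaussianReal_le_volume μ _)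
    _ = b - a := by simp [hab]

lemma integrable_sq_relu_sub {Ω : Type*} [MeasurableSpace Ω] {μ : Measure Ω} [IsFiniteMeasure μ]
    {z y : Ω → ℝ} (hz : MemLp z 2 μ) (hy_meas : AEStronglyMeasurable y μ) {C : ℝ}
    (hy : ∀ᵐ ω ∂μ, ‖y ω‖ ≤ C) : Integrable (fun ω => (relu (z ω) - y ω) ^ 2) μ := by
  have hrelu : MemLp (relu ∘ z) 2 μ :=
    hz.mono (continuous_relu.comp_aestronglyMeasurable hz.1)
      (ae_of_all _ fun ω => abs_relu_le (z ω))
  exact (hrelu.sub (MemLp.of_bound hy_meas C hy)).integrable_sq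

lemma stdGaussianPi_eq_map_ofLp (d : ℕ) :
    stdGaussianPi d = (stdGaussian (EuclideanSpace ℝ (Fin d))).map (WithLp.ofLp) := by
  rw [← map_pi_eq_stdGaussian, Measure.map_map (by fun_prop) (by fun_prop)]
  exact (Measure.map_id).symm

lemma map_sum_mul_stdGaussianPi {d : ℕ} (w : Fin d → ℝ) :
    (stdGaussianPi d).map (fun x => ∑ i, w i * x i) = gaussianReal 0 (∑ i, w i ^ 2).toNNReal := by
  have hL : (fun x : Fin d → ℝ => ∑ i, w i * x i) ∘ WithLp.ofLp
      = innerSL ℝ (WithLp.toLp 2 w : EuclideanSpace ℝ (Fin d)) := by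
    ext x; simp [PiLp.inner_apply, mul_comm]
  rw [stdGaussianPi_eq_map_ofLp, Measure.map_map (by fun_prop) (by fun_prop), hL,
    IsGaussian.map_eq_gaussianReal, integral_strongDual_stdGaussian, variance_dual_stdGaussian,
    innerSL_apply_norm, EuclideanSpace.norm_sq_eq]
  simp

/-- Thresholding step: for a distribution `D` on `ℝ^d × [0,1]` with Gaussian marginal,
a unit vector `w*`, `opt = E[(ReLU(w*·x) − y)²]`, and `α > 0`:
`P[sign(y − α) ≠ sign(w*·x)] ≤ opt/α² + 2α`. -/
theorem stmt14 (d : ℕ) (D : Measure ((Fin d → ℝ) × ℝ)) [IsProbabilityMeasure D]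
    (hmarg : D.map Prod.fst = stdGaussianPi d)
    (hy : ∀ᵐ p : (Fin d → ℝ) × ℝ ∂D, p.2 ∈ Set.Icc (0 : ℝ) 1)
    (wstar : Fin d → ℝ) (hwstar : ∑ i, (wstar i) ^ 2 = 1)
    (opt : ℝ) (hopt : opt = ∫ p : (Fin d → ℝ) × ℝ,
        (relu (∑ i, wstar i * p.1 i) - p.2) ^ 2 ∂D)
    (α : ℝ) (hα : 0 < α) :
    (D {p : (Fin d → ℝ) × ℝ | sgn (p.2 - α) ≠ sgn (∑ i, wstar i * p.1 i)}).toReal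
      ≤ opt / α ^ 2 + 2 * α := by
  set z : (Fin d → ℝ) × ℝ → ℝ := fun p => ∑ i, wstar i * p.1 i
  have hz_meas : Measurable z := by fun_prop
  have hz_law : D.map z = gaussianReal 0 1 := by
    change D.map ((fun x : Fin d → ℝ => ∑ i, wstar i * x i) ∘ Prod.fst) = _
    rw [← Measure.map_map (by fun_prop) measurable_fst, hmarg, map_sum_mul_stdGaussianPi, hwstar,
      Real.toNNReal_one]
  have hz_L2 : MemLp z 2 D :=
    (memLp_map_measure_iff (g := id) (by fun_prop) hz_meas.aemeasurable).1
      (hz_law ▸ memLp_id_gaussianReal 2)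
  have hloss : Integrable (fun p => (relu (z p) - p.2) ^ 2) D :=
    integrable_sq_relu_sub hz_L2 measurable_snd.aestronglyMeasurable
      (hy.mono fun p hp => abs_le.2 ⟨by linarith [hp.1], hp.2⟩)
  have hstrip : D.real (z ⁻¹' Set.Ico 0 (2 * α)) ≤ 2 * α := by
    rw [← map_measureReal_apply hz_meas measurableSet_Ico, hz_law]
    simpa using measureReal_gaussianReal_Ico_le 0 (by positivity : (0 : ℝ) ≤ 2 * α)
  calc D.real {p | sgn (p.2 - α) ≠ sgn (z p)}
      ≤ D.real ({p | α ^ 2 ≤ (relu (z p) - p.2) ^ 2} ∪ z ⁻¹' Set.Ico 0 (2 * α)) :=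
        measureReal_mono fun _ h => by exact sq_le_sq_relu_sub_or_mem_Ico_of_sgn_ne hα.le h
    _ ≤ D.real {p | α ^ 2 ≤ (relu (z p) - p.2) ^ 2} + D.real (z ⁻¹' Set.Ico 0 (2 * α)) :=
        measureReal_union_le _ _
    _ ≤ opt / α ^ 2 + 2 * α :=
        add_le_add (hopt ▸ measureReal_le_integral_sq_div_sq hloss hα.ne') hstrip
end
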